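/- Suppose (∑_{i=1}^N β_i)·(max_{i,t} r_i(t)) < (min_{i,t} c_i(t))·D_min (so that K_s is well defined) and 1 ≤ K_s ≤ K_c. Set ε = D_min and η = ln(1 + N·D_max/ε). Let s̃ be the online schedule: s̃_i(0) = 0 and, for each t = 1,…,T, the vector (s̃_i(t))_{i=1}^N minimizes ∑_{i=1}^N c_i(t)·x_i + (1/η)·∑_{i=1}^N β_i[(x_i + ε/N)·ln((x_i + ε/N)/(s̃_i(t−1) + ε/N)) − x_i] over {x : x_i ≥ 0 for all i, ∑_i x_i ≥ D(t)}, and assume the online schedule meets demand with equality, ∑_{i=1}^N s̃_i(t) = D(t) for every t. Then for every feasible schedule s, the total cost of s̃ is at most K_s·(1 + 2·ln(1 + N·D_max/D_min)) times the total cost of s. -/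

import Mathlib

/-!
Online primal–dual argument, with `e = ε / N`. Optimality of each regularised step gives the KKT
conditions: the marginal costs `c_i(t) + (β_i / η) log ((s̃_i(t) + e) / (s̃_i(t-1) + e))` are
nonnegative and equal their minimum `μ_t` wherever `s̃_i(t) > 0`. Hence the online operating cost
is at most `∑ μ_t D(t)` (the entropy terms telescope to something nonnegative), and since
`u - v ≤ u log (u / v)` the online switching cost is at most `η ∑ μ_t (D(t) + ε) ≤ 2η ∑ μ_t D(t)`.
Conversely `μ_t` is a feasible dual price: summation by parts against the weights
`(β_i / η) log ((D_max + e) / (s̃_i(t-1) + e)) ∈ [0, β_i]` bounds `∑ μ_t D(t)` by the cost of any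
feasible schedule plus the offsets `∑ β_i r_i(t) ≤ T (∑ β_i) r_max`, and these are absorbed by the
factor `K_s` because any feasible schedule has operating cost at least `T c_min D_min`.
-/

open Finset Real Filter Topology

lemma sub_le_mul_log_div {u v : ℝ} (hu : 0 < u) (hv : 0 < v) : u - v ≤ u * log (u / v) := by
  have := mul_le_mul_of_nonneg_left (one_sub_inv_le_log_of_pos (div_pos hu hv)) hu.le
  rwa [inv_div, mul_sub, mul_one, mul_div_cancel₀ _ hu.ne'] at this

lemma sum_Icc_one_sub_pred (f : ℕ → ℝ) (T : ℕ) :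
    ∑ t ∈ Icc 1 T, (f t - f (t - 1)) = f T - f 0 := by
  induction T with
  | zero => simp
  | succ T ih => rw [sum_Icc_succ_top (by omega), ih, Nat.add_sub_cancel]; ring

lemma sum_Icc_one_sub_succ_mul {y : ℕ → ℝ} (hy0 : y 0 = 0) (w : ℕ → ℝ) (T : ℕ) :
    ∑ t ∈ Icc 1 T, (w t - w (t + 1)) * y t =
      ∑ t ∈ Icc 1 T, w t * (y t - y (t - 1)) - w (T + 1) * y T := by
  induction T with
  | zero => simp [hy0]
  | succ T ih => rw [sum_Icc_succ_top (by omega), sum_Icc_succ_top (by omega), ih,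
      Nat.add_sub_cancel]; ring

lemma sum_mul_log_div_nonneg {x : ℕ → ℝ} {e : ℝ} (he : 0 < e) (hx0 : x 0 = 0)
    {T : ℕ} (hx : ∀ t ≤ T, 0 ≤ x t) :
    0 ≤ ∑ t ∈ Icc 1 T, x t * log ((x t + e) / (x (t - 1) + e)) := by
  have hxe : ∀ t ≤ T, 0 < x t + e := fun t ht => by linarith [hx t ht]
  have hterm : ∀ t ∈ Icc 1 T, (x t - x (t - 1)) - e * (log (x t + e) - log (x (t - 1) + e)) ≤
      x t * log ((x t + e) / (x (t - 1) + e)) := by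
    intro t ht
    have ht' := (mem_Icc.1 ht).2
    have hpos := hxe (t - 1) (by omega)
    have := sub_le_mul_log_div (hxe t ht') hpos
    rw [log_div (hxe t ht').ne' hpos.ne'] at this ⊢
    linarith
  have hend : e * log ((x T + e) / e) ≤ x T := by
    have := mul_le_mul_of_nonneg_left (log_le_sub_one_of_pos (div_pos (hxe T le_rfl) he)) he.le
    rwa [mul_sub, mul_div_cancel₀ _ he.ne', mul_one, add_sub_cancel_right] at this
  have htel := sum_le_sum hterm
  rw [sum_sub_distrib, ← mul_sum, sum_Icc_one_sub_pred x,
    sum_Icc_one_sub_pred (fun t => log (x t + e)),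
    hx0, zero_add, ← log_div (hxe T le_rfl).ne' he.ne'] at htel
  linarith

lemma mul_le_mul_max_sub_add {w β r d : ℝ} (hw : 0 ≤ w) (hwβ : w ≤ β) (hr : 0 ≤ r) :
    w * d ≤ β * max (d - r) 0 + β * r := by
  calc w * d ≤ w * max d 0 := mul_le_mul_of_nonneg_left (le_max_left _ _) hw
    _ ≤ β * max d 0 := mul_le_mul_of_nonneg_right hwβ (le_max_right _ _)
    _ ≤ β * (max (d - r) 0 + r) := mul_le_mul_of_nonneg_left
        (max_le (by linarith [le_max_left (d - r) 0]) (by linarith [le_max_right (d - r) 0]))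
        (hw.trans hwβ)
    _ = _ := mul_add _ _ _

lemma sum_log_div_mul_le {x y r : ℕ → ℝ} {β η e U : ℝ} {T : ℕ} (hβ : 0 ≤ β) (hη : 0 < η)
    (he : 0 < e) (hx : ∀ t ≤ T, 0 ≤ x t) (hxU : ∀ t ≤ T, x t ≤ U)
    (hηU : log ((U + e) / e) ≤ η) (hy0 : y 0 = 0) (hy : ∀ t ∈ Icc 1 T, 0 ≤ y t)
    (hr : ∀ t ∈ Icc 1 T, 0 ≤ r t) :
    ∑ t ∈ Icc 1 T, β / η * log ((x t + e) / (x (t - 1) + e)) * y t ≤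
      ∑ t ∈ Icc 1 T, (β * max (y t - y (t - 1) - r t) 0 + β * r t) := by
  -- Dual weights in `[0, β]` whose decrements are the log-ratios, so that summation by parts
  -- charges the increments of `y`.
  set w : ℕ → ℝ := fun t => β / η * log ((U + e) / (x (t - 1) + e))
  have hw : ∀ t, t ≤ T + 1 → 0 ≤ w t ∧ w t ≤ β := by
    intro t ht
    have h0 := hx (t - 1) (by omega)
    have hU := hxU (t - 1) (by omega)
    have hle : log ((U + e) / (x (t - 1) + e)) ≤ η :=
      (log_le_log (div_pos (by linarith) (by linarith)) (by gcongr <;> linarith)).trans hηU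
    refine ⟨mul_nonneg (by positivity) (log_nonneg ?_), ?_⟩
    · rw [le_div_iff₀ (by positivity)]; linarith
    · calc w t ≤ β / η * η := mul_le_mul_of_nonneg_left hle (by positivity)
        _ = β := div_mul_cancel₀ _ hη.ne'
  have hwdiff : ∀ t ∈ Icc 1 T, β / η * log ((x t + e) / (x (t - 1) + e)) = w t - w (t + 1) := by
    intro t ht
    have ht' := (mem_Icc.1 ht).2
    have h1 : 0 < x t + e := by linarith [hx t ht']
    have h2 : 0 < x (t - 1) + e := by linarith [hx (t - 1) (by omega)]
    have h3 : 0 < U + e := by linarith [hx t ht', hxU t ht']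
    simp only [w, Nat.add_sub_cancel]
    rw [log_div h1.ne' h2.ne', log_div h3.ne' h2.ne', log_div h3.ne' h1.ne']
    ring
  have hyT : 0 ≤ y T := by
    rcases Nat.eq_zero_or_pos T with rfl | hT
    · exact hy0.ge
    · exact hy T (mem_Icc.2 ⟨hT, le_rfl⟩)
  rw [sum_congr rfl fun t ht => by rw [hwdiff t ht], sum_Icc_one_sub_succ_mul hy0]
  have := mul_nonneg (hw (T + 1) le_rfl).1 hyT
  have := sum_le_sum fun t (ht : t ∈ Icc 1 T) =>
    mul_le_mul_max_sub_add (d := y t - y (t - 1)) (hw t (by linarith [(mem_Icc.1 ht).2])).1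
      (hw t (by linarith [(mem_Icc.1 ht).2])).2 (hr t ht)
  linarith

lemma HasDerivAt.nonneg_of_eventually_nhdsGT {φ : ℝ → ℝ} {φ' : ℝ} (h : HasDerivAt φ φ' 0)
    (hmin : ∀ᶠ τ in 𝓝[>] 0, φ 0 ≤ φ τ) : 0 ≤ φ' := by
  refine ge_of_tendsto h.tendsto_slope_zero_right ?_
  filter_upwards [hmin, self_mem_nhdsWithin] with τ hτ (hpos : 0 < τ)
  rw [zero_add, smul_eq_mul]
  exact mul_nonneg (inv_nonneg.2 hpos.le) (sub_nonneg.2 hτ)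

lemma HasDerivAt.add_mul_log_div_sub {f : ℝ → ℝ} {f' e B x : ℝ} (hf : HasDerivAt f f' x)
    (hx : f x + e ≠ 0) (hB : B ≠ 0) :
    HasDerivAt (fun y => (f y + e) * Real.log ((f y + e) / B) - f y)
      (f' * Real.log ((f x + e) / B)) x := by
  have hlin : HasDerivAt (fun y => f y + e) f' x := hf.add_const e
  refine ((hlin.mul ((hlin.div_const B).log (div_ne_zero hx hB))).sub hf).congr_deriv ?_
  field_simp
  ring

lemma add_mul_le_one_div_one_sub_mul {X q κ : ℝ} {n : ℕ} (hq : 0 ≤ q) (hqκ : q < κ)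
    (hX : n * κ ≤ X) : X + n * q ≤ 1 / (1 - q / κ) * X := by
  have hκ : 0 < κ := hq.trans_lt hqκ
  rw [one_sub_div hκ.ne', one_div_div, div_mul_eq_mul_div, le_div_iff₀ (by linarith)]
  nlinarith [mul_le_mul_of_nonneg_left hX hq,
    mul_nonneg (n.cast_nonneg : (0 : ℝ) ≤ n) (sq_nonneg q)]

noncomputable section Step

variable {ι : Type*} [Fintype ι]

/-- The objective of one online step: operating cost plus `1 / η` times the relative entropy of
`x + e` with respect to the previous decision `b + e`. -/
def regObj (c β : ι → ℝ) (η e : ℝ) (b x : ι → ℝ) : ℝ :=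
  (∑ i, c i * x i) + (1 / η) * ∑ i, β i * ((x i + e) * log ((x i + e) / (b i + e)) - x i)

def IsRegularizedStep (c β : ι → ℝ) (η e D : ℝ) (b a : ι → ℝ) : Prop :=
  (∀ i, 0 ≤ a i) ∧ D ≤ ∑ i, a i ∧ ∀ x : ι → ℝ, (∀ i, 0 ≤ x i) → D ≤ ∑ i, x i →
    regObj c β η e b a ≤ regObj c β η e b x

def marginalCost (c β : ι → ℝ) (η e : ℝ) (b a : ι → ℝ) (i : ι) : ℝ :=
  c i + β i / η * log ((a i + e) / (b i + e))

lemma hasDerivAt_regObj_add_smul {c β b a : ι → ℝ} {η e : ℝ} (ha : ∀ i, a i + e ≠ 0)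
    (hb : ∀ i, b i + e ≠ 0) (d : ι → ℝ) :
    HasDerivAt (fun τ : ℝ => regObj c β η e b (a + τ • d))
      (∑ i, d i * marginalCost c β η e b a i) 0 := by
  have hsplit : (fun τ : ℝ => regObj c β η e b (a + τ • d)) = ∑ i, fun τ =>
      c i * (a i + τ * d i) + 1 / η * (β i *
        ((a i + τ * d i + e) * log ((a i + τ * d i + e) / (b i + e)) - (a i + τ * d i))) := by
    ext τ
    simp [regObj, sum_add_distrib, mul_sum]
  rw [hsplit]
  refine HasDerivAt.sum fun i _ => ?_
  have hline : HasDerivAt (fun τ : ℝ => a i + τ * d i) (d i) 0 := by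
    simpa using ((hasDerivAt_id (0 : ℝ)).mul_const (d i)).const_add (a i)
  have hent := HasDerivAt.add_mul_log_div_sub hline (by simpa using ha i) (hb i)
  refine ((hline.const_mul (c i)).add ((hent.const_mul (β i)).const_mul (1 / η))).congr_deriv ?_
  simp only [marginalCost, zero_mul, add_zero]
  ring

def demandMultiplier (c β : ι → ℝ) (η e : ℝ) (b a : ι → ℝ) : ℝ :=
  ⨅ i, marginalCost c β η e b a i

lemma demandMultiplier_le (c β : ι → ℝ) (η e : ℝ) (b a : ι → ℝ) (i : ι) :
    demandMultiplier c β η e b a ≤ marginalCost c β η e b a i :=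
  ciInf_le (Finite.bddBelow_range _) i

namespace IsRegularizedStep

variable {c β b a : ι → ℝ} {η e D : ℝ}

lemma sum_mul_marginalCost_nonneg (h : IsRegularizedStep c β η e D b a) (he : 0 < e)
    (hb : ∀ i, 0 ≤ b i) {d : ι → ℝ}
    (hfeas : ∀ᶠ τ in 𝓝[>] (0 : ℝ), (∀ i, 0 ≤ (a + τ • d) i) ∧ D ≤ ∑ i, (a + τ • d) i) :
    0 ≤ ∑ i, d i * marginalCost c β η e b a i := by
  refine (hasDerivAt_regObj_add_smul (fun i => by linarith [h.1 i]) (fun i => by linarith [hb i])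
    d).nonneg_of_eventually_nhdsGT ?_
  filter_upwards [hfeas] with τ ⟨hx, hxD⟩
  simpa using h.2.2 _ hx hxD

lemma marginalCost_nonneg (h : IsRegularizedStep c β η e D b a) (he : 0 < e)
    (hb : ∀ i, 0 ≤ b i) (j : ι) : 0 ≤ marginalCost c β η e b a j := by
  classical
  have := h.sum_mul_marginalCost_nonneg he hb (d := Pi.single j 1) <| by
    filter_upwards [self_mem_nhdsWithin] with τ (hτ : 0 < τ)
    refine ⟨fun i => ?_, ?_⟩
    · simp only [Pi.add_apply, Pi.smul_apply, smul_eq_mul]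
      have hsingle : (0 : ι → ℝ) ≤ Pi.single j 1 := Pi.single_nonneg.2 zero_le_one
      exact add_nonneg (h.1 i) (mul_nonneg hτ.le (hsingle i))
    · simp only [Pi.add_apply, Pi.smul_apply, Pi.single_apply, smul_eq_mul, mul_ite, mul_one,
        mul_zero, sum_add_distrib, sum_ite_eq', mem_univ, ↓reduceIte]
      linarith [h.2.1]
  simpa [Pi.single_apply] using this

lemma marginalCost_le (h : IsRegularizedStep c β η e D b a) (he : 0 < e)
    (hb : ∀ i, 0 ≤ b i) {i : ι} (hi : 0 < a i) (j : ι) :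
    marginalCost c β η e b a i ≤ marginalCost c β η e b a j := by
  classical
  have := h.sum_mul_marginalCost_nonneg he hb (d := Pi.single j 1 - Pi.single i 1) <| by
    filter_upwards [Ioo_mem_nhdsGT hi] with τ ⟨hτ0, hτi⟩
    refine ⟨fun k => ?_, ?_⟩
    · have := h.1 k
      simp only [Pi.add_apply, Pi.smul_apply, Pi.sub_apply, Pi.single_apply, smul_eq_mul]
      split_ifs with hkj hki <;> subst_vars <;> linarith
    · simpa only [Pi.add_apply, Pi.smul_apply, Pi.sub_apply, Pi.single_apply, smul_eq_mul,
        mul_sub, mul_ite, mul_one, mul_zero, sum_add_distrib, sum_sub_distrib, sum_ite_eq',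
        mem_univ, ↓reduceIte, sub_self, add_zero] using h.2.1
  simpa [Pi.single_apply, sub_mul, sum_sub_distrib] using this

lemma demandMultiplier_nonneg (h : IsRegularizedStep c β η e D b a) (he : 0 < e)
    (hb : ∀ i, 0 ≤ b i) : 0 ≤ demandMultiplier c β η e b a :=
  Real.iInf_nonneg (h.marginalCost_nonneg he hb)

lemma marginalCost_eq_demandMultiplier (h : IsRegularizedStep c β η e D b a) (he : 0 < e)
    (hb : ∀ i, 0 ≤ b i) {i : ι} (hi : 0 < a i) :
    marginalCost c β η e b a i = demandMultiplier c β η e b a :=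
  have : Nonempty ι := ⟨i⟩
  le_antisymm (le_ciInf (h.marginalCost_le he hb hi)) (demandMultiplier_le _ _ _ _ _ _ i)

lemma sum_marginalCost_mul_eq (h : IsRegularizedStep c β η e D b a) (he : 0 < e)
    (hb : ∀ i, 0 ≤ b i) :
    ∑ i, marginalCost c β η e b a i * a i = demandMultiplier c β η e b a * ∑ i, a i := by
  rw [mul_sum]
  refine sum_congr rfl fun i _ => ?_
  rcases (h.1 i).eq_or_lt with hi | hi
  · rw [← hi, mul_zero, mul_zero]
  · rw [h.marginalCost_eq_demandMultiplier he hb hi]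

lemma mul_max_sub_le (h : IsRegularizedStep c β η e D b a) (hη : 0 < η) (he : 0 < e)
    (hb : ∀ i, 0 ≤ b i) {i : ι} (hβ : 0 ≤ β i) (hc : 0 ≤ c i) {r : ℝ} (hr : 0 ≤ r) :
    β i * max (a i - b i - r) 0 ≤ η * demandMultiplier c β η e b a * (a i + e) := by
  have hμ := h.demandMultiplier_nonneg he hb
  have hae : 0 < a i + e := by linarith [h.1 i]
  rcases le_or_gt (a i - b i - r) 0 with hle | hlt
  · rw [max_eq_right hle, mul_zero]
    positivity
  have hg := h.marginalCost_eq_demandMultiplier he hb (show 0 < a i by linarith [hb i])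
  rw [marginalCost] at hg
  have hgap := sub_le_mul_log_div hae (show 0 < b i + e by linarith [hb i])
  calc β i * max (a i - b i - r) 0 ≤ β i * ((a i + e) - (b i + e)) := by
        rw [max_eq_left hlt.le]
        exact mul_le_mul_of_nonneg_left (by linarith) hβ
    _ ≤ β i * ((a i + e) * log ((a i + e) / (b i + e))) := mul_le_mul_of_nonneg_left hgap hβ
    _ = η * (demandMultiplier c β η e b a - c i) * (a i + e) := by
        rw [← hg]
        field_simp
        ring
    _ ≤ η * demandMultiplier c β η e b a * (a i + e) := by
        gcongr
        linarith

end IsRegularizedStep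

end Step

noncomputable section Schedule

variable {ι : Type*} [Fintype ι] {c : ι → ℕ → ℝ} {β : ι → ℝ} {r : ι → ℕ → ℝ} {D : ℕ → ℝ}
  {x s : ι → ℕ → ℝ} {η e : ℝ} {T : ℕ}

def operatingCost (c : ι → ℕ → ℝ) (T : ℕ) (s : ι → ℕ → ℝ) : ℝ :=
  ∑ t ∈ Icc 1 T, ∑ i, c i t * s i t

def switchingCost (β : ι → ℝ) (r : ι → ℕ → ℝ) (T : ℕ) (s : ι → ℕ → ℝ) : ℝ :=
  ∑ t ∈ Icc 1 T, ∑ i, β i * max (s i t - s i (t - 1) - r i t) 0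

def totalCost (c : ι → ℕ → ℝ) (β : ι → ℝ) (r : ι → ℕ → ℝ) (T : ℕ) (s : ι → ℕ → ℝ) : ℝ :=
  operatingCost c T s + switchingCost β r T s

lemma sum_cost_eq_totalCost (c : ι → ℕ → ℝ) (β : ι → ℝ) (r : ι → ℕ → ℝ) (T : ℕ)
    (s : ι → ℕ → ℝ) :
    ∑ t ∈ Icc 1 T, ∑ i, (c i t * s i t + β i * max (s i t - s i (t - 1) - r i t) 0) =
      totalCost c β r T s := by
  simp only [totalCost, operatingCost, switchingCost, ← sum_add_distrib]

lemma switchingCost_nonneg (hβ : ∀ i, 0 ≤ β i) : 0 ≤ switchingCost β r T s :=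
  sum_nonneg fun _ _ => sum_nonneg fun i _ => mul_nonneg (hβ i) (le_max_right _ _)

lemma nonneg_of_isRegularizedStep (hx0 : ∀ i, x i 0 = 0)
    (hstep : ∀ t ∈ Icc 1 T, IsRegularizedStep (c · t) β η e (D t) (x · (t - 1)) (x · t)) :
    ∀ t ≤ T, ∀ i, 0 ≤ x i t := by
  intro t ht i
  rcases Nat.eq_zero_or_pos t with rfl | ht0
  · exact (hx0 i).ge
  · exact (hstep t (mem_Icc.2 ⟨ht0, ht⟩)).1 i

lemma le_of_isRegularizedStep {U : ℝ} (hx0 : ∀ i, x i 0 = 0)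
    (hstep : ∀ t ∈ Icc 1 T, IsRegularizedStep (c · t) β η e (D t) (x · (t - 1)) (x · t))
    (hxD : ∀ t ∈ Icc 1 T, ∑ i, x i t = D t) (hDU : ∀ t ∈ Icc 1 T, D t ≤ U) (hU : 0 ≤ U) :
    ∀ t ≤ T, ∀ i, x i t ≤ U := by
  intro t ht i
  rcases Nat.eq_zero_or_pos t with rfl | ht0
  · exact (hx0 i).trans_le hU
  · have ht' : t ∈ Icc 1 T := mem_Icc.2 ⟨ht0, ht⟩
    calc x i t ≤ ∑ j, x j t := single_le_sum (fun j _ => (hstep t ht').1 j) (mem_univ i)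
      _ ≤ U := (hxD t ht').trans_le (hDU t ht')

lemma operatingCost_le (he : 0 < e) (hη : 0 < η) (hβ : ∀ i, 0 ≤ β i) (hx0 : ∀ i, x i 0 = 0)
    (hstep : ∀ t ∈ Icc 1 T, IsRegularizedStep (c · t) β η e (D t) (x · (t - 1)) (x · t))
    (hxD : ∀ t ∈ Icc 1 T, ∑ i, x i t = D t) :
    operatingCost c T x ≤
      ∑ t ∈ Icc 1 T, demandMultiplier (c · t) β η e (x · (t - 1)) (x · t) * D t := by
  have hx := nonneg_of_isRegularizedStep hx0 hstep
  have hslot : ∀ t ∈ Icc 1 T, ∑ i, c i t * x i t +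
      1 / η * ∑ i, β i * (x i t * log ((x i t + e) / (x i (t - 1) + e))) =
        demandMultiplier (c · t) β η e (x · (t - 1)) (x · t) * D t := by
    intro t ht
    rw [← hxD t ht, ← (hstep t ht).sum_marginalCost_mul_eq he (hx (t - 1) (by
      linarith [(mem_Icc.1 ht).2, Nat.sub_le t 1]))]
    simp only [marginalCost, mul_sum, ← sum_add_distrib]
    exact sum_congr rfl fun i _ => by ring
  have hreg : 0 ≤ ∑ t ∈ Icc 1 T,
      1 / η * ∑ i, β i * (x i t * log ((x i t + e) / (x i (t - 1) + e))) := by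
    rw [← mul_sum, sum_comm]
    refine mul_nonneg (by positivity) (sum_nonneg fun i _ => ?_)
    rw [← mul_sum]
    exact mul_nonneg (hβ i) (sum_mul_log_div_nonneg he (hx0 i) fun t ht => hx t ht i)
  rw [← sum_congr rfl hslot, sum_add_distrib, operatingCost]
  linarith

lemma switchingCost_le (he : 0 < e) (hη : 0 < η) (hβ : ∀ i, 0 ≤ β i)
    (hc : ∀ i, ∀ t ∈ Icc 1 T, 0 ≤ c i t) (hr : ∀ i, ∀ t ∈ Icc 1 T, 0 ≤ r i t)
    (hx0 : ∀ i, x i 0 = 0)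
    (hstep : ∀ t ∈ Icc 1 T, IsRegularizedStep (c · t) β η e (D t) (x · (t - 1)) (x · t))
    (hxD : ∀ t ∈ Icc 1 T, ∑ i, x i t = D t) (hDe : ∀ t ∈ Icc 1 T, Fintype.card ι * e ≤ D t) :
    switchingCost β r T x ≤
      2 * η * ∑ t ∈ Icc 1 T, demandMultiplier (c · t) β η e (x · (t - 1)) (x · t) * D t := by
  rw [switchingCost, mul_sum]
  refine sum_le_sum fun t ht => ?_
  have hprev := nonneg_of_isRegularizedStep hx0 hstep (t - 1)
    (by linarith [(mem_Icc.1 ht).2, Nat.sub_le t 1])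
  have hμ := (hstep t ht).demandMultiplier_nonneg he hprev
  calc ∑ i, β i * max (x i t - x i (t - 1) - r i t) 0
      ≤ ∑ i, η * demandMultiplier (c · t) β η e (x · (t - 1)) (x · t) * (x i t + e) :=
        sum_le_sum fun i _ => (hstep t ht).mul_max_sub_le hη he hprev (hβ i) (hc i t ht) (hr i t ht)
    _ = η * demandMultiplier (c · t) β η e (x · (t - 1)) (x · t) *
          (D t + Fintype.card ι * e) := by
        rw [← mul_sum, sum_add_distrib, hxD t ht, sum_const, card_univ, nsmul_eq_mul]
    _ ≤ 2 * η * (demandMultiplier (c · t) β η e (x · (t - 1)) (x · t) * D t) := by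
        nlinarith [mul_nonneg hη.le hμ, hDe t ht]

lemma sum_demandMultiplier_mul_le {U : ℝ} (he : 0 < e) (hη : 0 < η) (hβ : ∀ i, 0 ≤ β i)
    (hr : ∀ i, ∀ t ∈ Icc 1 T, 0 ≤ r i t) (hx0 : ∀ i, x i 0 = 0)
    (hstep : ∀ t ∈ Icc 1 T, IsRegularizedStep (c · t) β η e (D t) (x · (t - 1)) (x · t))
    (hxU : ∀ t ≤ T, ∀ i, x i t ≤ U) (hηU : log ((U + e) / e) ≤ η)
    (hs0 : ∀ i, s i 0 = 0) (hs : ∀ i, ∀ t ∈ Icc 1 T, 0 ≤ s i t)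
    (hsD : ∀ t ∈ Icc 1 T, D t ≤ ∑ i, s i t) :
    ∑ t ∈ Icc 1 T, demandMultiplier (c · t) β η e (x · (t - 1)) (x · t) * D t ≤
      operatingCost c T s + switchingCost β r T s + ∑ t ∈ Icc 1 T, ∑ i, β i * r i t := by
  have hx := nonneg_of_isRegularizedStep hx0 hstep
  have hslot : ∀ t ∈ Icc 1 T, demandMultiplier (c · t) β η e (x · (t - 1)) (x · t) * D t ≤
      ∑ i, c i t * s i t + ∑ i, β i / η * log ((x i t + e) / (x i (t - 1) + e)) * s i t := by
    intro t ht
    have hprev := hx (t - 1) (by linarith [(mem_Icc.1 ht).2, Nat.sub_le t 1])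
    calc demandMultiplier (c · t) β η e (x · (t - 1)) (x · t) * D t
        ≤ demandMultiplier (c · t) β η e (x · (t - 1)) (x · t) * ∑ i, s i t :=
          mul_le_mul_of_nonneg_left (hsD t ht) ((hstep t ht).demandMultiplier_nonneg he hprev)
      _ ≤ ∑ i, marginalCost (c · t) β η e (x · (t - 1)) (x · t) i * s i t := by
          rw [mul_sum]
          exact sum_le_sum fun i _ =>
            mul_le_mul_of_nonneg_right (demandMultiplier_le _ _ _ _ _ _ i) (hs i t ht)
      _ = _ := by simp only [marginalCost, add_mul, sum_add_distrib]
  have hdual : ∑ t ∈ Icc 1 T, ∑ i, β i / η * log ((x i t + e) / (x i (t - 1) + e)) * s i t ≤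
      switchingCost β r T s + ∑ t ∈ Icc 1 T, ∑ i, β i * r i t := by
    rw [switchingCost, ← sum_add_distrib, sum_comm]
    simp only [← sum_add_distrib]
    rw [sum_comm (f := fun t i => β i * max (s i t - s i (t - 1) - r i t) 0 + β i * r i t)]
    exact sum_le_sum fun i _ => sum_log_div_mul_le (hβ i) hη he (fun t ht => hx t ht i)
      (fun t ht => hxU t ht i) hηU (hs0 i) (hs i) (hr i)
  have := sum_le_sum hslot
  rw [sum_add_distrib] at this
  rw [operatingCost]
  linarith

lemma mul_le_operatingCost {cmin Dmin : ℝ} (hcmin : 0 ≤ cmin)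
    (hc : ∀ i, ∀ t ∈ Icc 1 T, cmin ≤ c i t)
    (hD : ∀ t ∈ Icc 1 T, Dmin ≤ D t) (hs : ∀ i, ∀ t ∈ Icc 1 T, 0 ≤ s i t)
    (hsD : ∀ t ∈ Icc 1 T, D t ≤ ∑ i, s i t) : T * (cmin * Dmin) ≤ operatingCost c T s := by
  have hslot : ∀ t ∈ Icc 1 T, cmin * Dmin ≤ ∑ i, c i t * s i t := fun t ht =>
    calc cmin * Dmin ≤ cmin * ∑ i, s i t :=
          mul_le_mul_of_nonneg_left ((hD t ht).trans (hsD t ht)) hcmin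
      _ = ∑ i, cmin * s i t := mul_sum _ _ _
      _ ≤ _ := sum_le_sum fun i _ => mul_le_mul_of_nonneg_right (hc i t ht) (hs i t ht)
  simpa [operatingCost] using sum_le_sum hslot

lemma sum_Icc_sum_mul_le {rmax : ℝ} (hβ : ∀ i, 0 ≤ β i) (hr : ∀ i, ∀ t ∈ Icc 1 T, r i t ≤ rmax) :
    ∑ t ∈ Icc 1 T, ∑ i, β i * r i t ≤ T * ((∑ i, β i) * rmax) := by
  have hslot : ∀ t ∈ Icc 1 T, ∑ i, β i * r i t ≤ (∑ i, β i) * rmax := fun t ht => by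
    rw [sum_mul]
    exact sum_le_sum fun i _ => mul_le_mul_of_nonneg_left (hr i t ht) (hβ i)
  simpa using sum_le_sum hslot

theorem totalCost_le_of_isRegularizedStep {U : ℝ} (he : 0 < e) (hη : 0 < η)
    (hβ : ∀ i, 0 ≤ β i) (hc : ∀ i, ∀ t ∈ Icc 1 T, 0 ≤ c i t) (hr : ∀ i, ∀ t ∈ Icc 1 T, 0 ≤ r i t)
    (hx0 : ∀ i, x i 0 = 0)
    (hstep : ∀ t ∈ Icc 1 T, IsRegularizedStep (c · t) β η e (D t) (x · (t - 1)) (x · t))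
    (hxD : ∀ t ∈ Icc 1 T, ∑ i, x i t = D t) (hDe : ∀ t ∈ Icc 1 T, Fintype.card ι * e ≤ D t)
    (hDU : ∀ t ∈ Icc 1 T, D t ≤ U) (hU : 0 ≤ U) (hηU : log ((U + e) / e) ≤ η)
    (hs0 : ∀ i, s i 0 = 0) (hs : ∀ i, ∀ t ∈ Icc 1 T, 0 ≤ s i t)
    (hsD : ∀ t ∈ Icc 1 T, D t ≤ ∑ i, s i t) :
    totalCost c β r T x ≤
      (1 + 2 * η) * (totalCost c β r T s + ∑ t ∈ Icc 1 T, ∑ i, β i * r i t) := by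
  have hop := operatingCost_le he hη hβ hx0 hstep hxD
  have hsw := switchingCost_le he hη hβ hc hr hx0 hstep hxD hDe
  have hdual := sum_demandMultiplier_mul_le he hη hβ hr hx0 hstep
    (le_of_isRegularizedStep hx0 hstep hxD hDU hU) hηU hs0 hs hsD
  unfold totalCost
  linarith [mul_le_mul_of_nonneg_left hdual (by linarith : 0 ≤ 1 + 2 * η)]

theorem totalCost_add_sum_mul_le {cmin Dmin rmax : ℝ} (hβ : ∀ i, 0 ≤ β i) (hcmin : 0 ≤ cmin)
    (hc : ∀ i, ∀ t ∈ Icc 1 T, cmin ≤ c i t) (hr : ∀ i, ∀ t ∈ Icc 1 T, r i t ≤ rmax)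
    (hrmax : 0 ≤ rmax) (hwell : (∑ i, β i) * rmax < cmin * Dmin)
    (hD : ∀ t ∈ Icc 1 T, Dmin ≤ D t) (hs : ∀ i, ∀ t ∈ Icc 1 T, 0 ≤ s i t)
    (hsD : ∀ t ∈ Icc 1 T, D t ≤ ∑ i, s i t) :
    totalCost c β r T s + ∑ t ∈ Icc 1 T, ∑ i, β i * r i t ≤
      1 / (1 - (∑ i, β i) * rmax / (cmin * Dmin)) * totalCost c β r T s := by
  have hcost : T * (cmin * Dmin) ≤ totalCost c β r T s :=
    (mul_le_operatingCost hcmin hc hD hs hsD).trans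
      (le_add_of_nonneg_right (switchingCost_nonneg hβ))
  exact (add_le_add le_rfl (sum_Icc_sum_mul_le hβ hr)).trans
    (add_mul_le_one_div_one_sub_mul (mul_nonneg (sum_nonneg fun i _ => hβ i) hrmax) hwell hcost)

end Schedule

theorem regularization_offset_competitive_case1_general
    (N T : ℕ) (hN : 1 ≤ N)
    (c : Fin N → ℕ → ℝ) (hc : ∀ i, ∀ t ∈ Finset.Icc 1 T, 0 < c i t)
    (β : Fin N → ℝ) (hβ : ∀ i, 0 ≤ β i)
    (r : Fin N → ℕ → ℝ) (hr : ∀ i, ∀ t ∈ Finset.Icc 1 T, 0 < r i t)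
    (D : ℕ → ℝ)
    (Dmin : ℝ) (hDmin : IsLeast {x | ∃ t ∈ Finset.Icc 1 T, D t = x} Dmin)
    (hDminpos : 0 < Dmin)
    (Dmax : ℝ) (hDmax : IsGreatest {x | ∃ t ∈ Finset.Icc 1 T, D t = x} Dmax)
    (cmin : ℝ) (hcmin : IsLeast {x | ∃ i : Fin N, ∃ t ∈ Finset.Icc 1 T, c i t = x} cmin)
    (rmax : ℝ) (hrmax : IsGreatest {x | ∃ i : Fin N, ∃ t ∈ Finset.Icc 1 T, r i t = x} rmax)
    -- K_s is well defined
    (hwell : (∑ i, β i) * rmax < cmin * Dmin)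
    (ε : ℝ) (hε : ε = Dmin)
    (Ks : ℝ) (hKs : Ks = 1 / (1 - (∑ i, β i) * rmax / (cmin * Dmin)))
    (η : ℝ) (hη : η = Real.log (1 + N * Dmax / ε))
    -- the online schedule s̃
    (st : Fin N → ℕ → ℝ)
    (hst0 : ∀ i, st i 0 = 0)
    (honline : ∀ t ∈ Finset.Icc 1 T,
      (∀ i, 0 ≤ st i t) ∧ D t ≤ ∑ i, st i t ∧
      ∀ x : Fin N → ℝ, (∀ i, 0 ≤ x i) → D t ≤ ∑ i, x i →
        (∑ i, c i t * st i t) +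
            (1 / η) * ∑ i, β i *
              ((st i t + ε / N) *
                  Real.log ((st i t + ε / N) / (st i (t - 1) + ε / N)) - st i t) ≤
          (∑ i, c i t * x i) +
            (1 / η) * ∑ i, β i *
              ((x i + ε / N) *
                  Real.log ((x i + ε / N) / (st i (t - 1) + ε / N)) - x i))
    -- the online schedule meets demand with equality
    (heq : ∀ t ∈ Finset.Icc 1 T, ∑ i, st i t = D t) :
    -- for every feasible schedule s
    ∀ s : Fin N → ℕ → ℝ,
      (∀ i, s i 0 = 0) →
      (∀ i, ∀ t ∈ Finset.Icc 1 T, 0 ≤ s i t) →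
      (∀ t ∈ Finset.Icc 1 T, D t ≤ ∑ i, s i t) →
      ∑ t ∈ Finset.Icc 1 T, ∑ i,
          (c i t * st i t + β i * max (st i t - st i (t - 1) - r i t) 0) ≤
        Ks * (1 + 2 * Real.log (1 + N * Dmax / Dmin)) *
          ∑ t ∈ Finset.Icc 1 T, ∑ i,
            (c i t * s i t + β i * max (s i t - s i (t - 1) - r i t) 0) := by
  intro s hs0 hsnn hsfeas
  subst ε Ks η
  have hNpos : (0 : ℝ) < N := by exact_mod_cast hN
  have hDlo : ∀ t ∈ Icc 1 T, Dmin ≤ D t := fun t ht => hDmin.2 ⟨t, ht, rfl⟩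
  have hDhi : ∀ t ∈ Icc 1 T, D t ≤ Dmax := fun t ht => hDmax.2 ⟨t, ht, rfl⟩
  have hDmax_pos : 0 < Dmax := by obtain ⟨t, ht, rfl⟩ := hDmin.1; linarith [hDhi t ht]
  have hη : 0 < log (1 + N * Dmax / Dmin) :=
    log_pos (by linarith [show 0 < N * Dmax / Dmin by positivity])
  have hηU : log ((Dmax + Dmin / N) / (Dmin / N)) ≤ log (1 + N * Dmax / Dmin) :=
    (congrArg log (by field_simp; ring)).le
  have hDe : ∀ t ∈ Icc 1 T, Fintype.card (Fin N) * (Dmin / N) ≤ D t := fun t ht => by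
    rw [Fintype.card_fin, mul_div_cancel₀ _ hNpos.ne']; exact hDlo t ht
  have hcmin_nonneg : 0 ≤ cmin := by obtain ⟨i, t, ht, rfl⟩ := hcmin.1; exact (hc i t ht).le
  have hrmax_nonneg : 0 ≤ rmax := by obtain ⟨i, t, ht, rfl⟩ := hrmax.1; exact (hr i t ht).le
  have honline_le := totalCost_le_of_isRegularizedStep (by positivity) hη hβ
    (fun i t ht => (hc i t ht).le) (fun i t ht => (hr i t ht).le) hst0 honline heq hDe hDhi
    hDmax_pos.le hηU hs0 hsnn hsfeas
  have hoffset := totalCost_add_sum_mul_le hβ hcmin_nonneg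
    (fun i t ht => hcmin.2 ⟨i, t, ht, rfl⟩) (fun i t ht => hrmax.2 ⟨i, t, ht, rfl⟩)
    hrmax_nonneg hwell hDlo hsnn hsfeas
  rw [sum_cost_eq_totalCost, sum_cost_eq_totalCost, mul_comm _ (1 + _), mul_assoc]
  exact honline_le.trans (by gcongr)

/-- Theorem 3, case `1 ≤ K_s ≤ K_c`: the online regularization algorithm with
switching cost offset achieves competitive ratio `K_s·(1 + 2·ln(1 + N·D_max/D_min))`. -/
theorem regularization_offset_competitive_case1
    (N T : ℕ) (hN : 1 ≤ N) (hT : 1 ≤ T)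
    (c : Fin N → ℕ → ℝ) (hc : ∀ i, ∀ t ∈ Finset.Icc 1 T, 0 < c i t)
    (β : Fin N → ℝ) (hβ : ∀ i, 0 ≤ β i)
    (r : Fin N → ℕ → ℝ) (hr : ∀ i, ∀ t ∈ Finset.Icc 1 T, 0 < r i t)
    (D : ℕ → ℝ)
    (Dmin : ℝ) (hDmin : IsLeast {x | ∃ t ∈ Finset.Icc 1 T, D t = x} Dmin)
    (hDminpos : 0 < Dmin)
    (Dmax : ℝ) (hDmax : IsGreatest {x | ∃ t ∈ Finset.Icc 1 T, D t = x} Dmax)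
    (βmax : ℝ) (hβmax : IsGreatest (Set.range β) βmax)
    (cmin : ℝ) (hcmin : IsLeast {x | ∃ i : Fin N, ∃ t ∈ Finset.Icc 1 T, c i t = x} cmin)
    (rmin : ℝ) (hrmin : IsLeast {x | ∃ i : Fin N, ∃ t ∈ Finset.Icc 1 T, r i t = x} rmin)
    (rmax : ℝ) (hrmax : IsGreatest {x | ∃ i : Fin N, ∃ t ∈ Finset.Icc 1 T, r i t = x} rmax)
    -- K_s is well defined
    (hwell : (∑ i, β i) * rmax < cmin * Dmin)
    (ε : ℝ) (hε : ε = Dmin)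
    (Kc : ℝ) (hKc : Kc = max (2 * (1 + ε / Dmin) * Dmax * βmax / (rmin * cmin)) 1)
    (Ks : ℝ) (hKs : Ks = 1 / (1 - (∑ i, β i) * rmax / (cmin * Dmin)))
    -- case 1: 1 ≤ K_s ≤ K_c
    (hKs1 : 1 ≤ Ks) (hKsKc : Ks ≤ Kc)
    (η : ℝ) (hη : η = Real.log (1 + N * Dmax / ε))
    -- the online schedule s̃
    (st : Fin N → ℕ → ℝ)
    (hst0 : ∀ i, st i 0 = 0)
    (honline : ∀ t ∈ Finset.Icc 1 T,
      (∀ i, 0 ≤ st i t) ∧ D t ≤ ∑ i, st i t ∧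
      ∀ x : Fin N → ℝ, (∀ i, 0 ≤ x i) → D t ≤ ∑ i, x i →
        (∑ i, c i t * st i t) +
            (1 / η) * ∑ i, β i *
              ((st i t + ε / N) *
                  Real.log ((st i t + ε / N) / (st i (t - 1) + ε / N)) - st i t) ≤
          (∑ i, c i t * x i) +
            (1 / η) * ∑ i, β i *
              ((x i + ε / N) *
                  Real.log ((x i + ε / N) / (st i (t - 1) + ε / N)) - x i))
    -- the online schedule meets demand with equality
    (heq : ∀ t ∈ Finset.Icc 1 T, ∑ i, st i t = D t) :
    -- for every feasible schedule s
    ∀ s : Fin N → ℕ → ℝ,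
      (∀ i, s i 0 = 0) →
      (∀ i, ∀ t ∈ Finset.Icc 1 T, 0 ≤ s i t) →
      (∀ t ∈ Finset.Icc 1 T, D t ≤ ∑ i, s i t) →
      ∑ t ∈ Finset.Icc 1 T, ∑ i,
          (c i t * st i t + β i * max (st i t - st i (t - 1) - r i t) 0) ≤
        Ks * (1 + 2 * Real.log (1 + N * Dmax / Dmin)) *
          ∑ t ∈ Finset.Icc 1 T, ∑ i,
            (c i t * s i t + β i * max (s i t - s i (t - 1) - r i t) 0) :=
  regularization_offset_competitive_case1_general N T hN c hc β hβ r hr D Dmin hDmin hDminpos Dmax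
    hDmax cmin hcmin rmax hrmax hwell ε hε Ks hKs η hη st hst0 honline heq
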